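/- For any maximum independent set M of G_P, the partial order F_M is a P-forest. -/

import Mathlib

attribute [local instance] Classical.propDecidable

noncomputable section

open Finset

variable {n : ℕ}

/-- The comparability graph of the poset structure `P` on `Fin n`; for an order
ideal of `P`, connectivity of its induced subgraph in this graph agrees with
connectivity of the Hasse diagram. -/
def compGraph (P : PartialOrder (Fin n)) : SimpleGraph (Fin n) where
  Adj i j := i ≠ j ∧ (P.le i j ∨ P.le j i)
  symm := by
    constructor
    intro i j h
    exact ⟨h.1.symm, h.2.symm⟩
  loopless := by
    constructor
    intro i h
    exact h.1 rfl

/-- `J` is an order ideal of the poset `P`. -/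
def IsIdeal (P : PartialOrder (Fin n)) (J : Finset (Fin n)) : Prop :=
  ∀ i ∈ J, ∀ j : Fin n, P.le j i → j ∈ J

/-- The Hasse diagram of `J` as a subposet of `P` is a connected graph. -/
def JConn (P : PartialOrder (Fin n)) (J : Finset (Fin n)) : Prop :=
  ((compGraph P).induce (↑J : Set (Fin n))).Connected

/-- `J` is a connected order ideal of `P`. -/
def IsConnIdeal (P : PartialOrder (Fin n)) (J : Finset (Fin n)) : Prop :=
  IsIdeal P J ∧ JConn P J

/-- The type of connected order ideals of `P` (the vertices of `G_P`). -/
abbrev ConnIdeal (P : PartialOrder (Fin n)) : Type :=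
  {J : Finset (Fin n) // IsConnIdeal P J}

instance (P : PartialOrder (Fin n)) : Fintype (ConnIdeal P) := Fintype.ofFinite _

/-- `A` and `B` intersect nontrivially. -/
def Nontriv (A B : Finset (Fin n)) : Prop :=
  (A ∩ B).Nonempty ∧ ¬ A ⊆ B ∧ ¬ B ⊆ A

/-- The graph `G_P` on the connected order ideals of `P`, with two ideals
adjacent iff they intersect nontrivially. -/
def GP (P : PartialOrder (Fin n)) : SimpleGraph (ConnIdeal P) where
  Adj A B := Nontriv A.1 B.1
  symm := by
    constructor
    intro A B h
    exact ⟨by rw [Finset.inter_comm]; exact h.1, h.2.2, h.2.1⟩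
  loopless := by
    constructor
    intro A h
    exact h.2.1 (Finset.Subset.refl _)

instance (P : PartialOrder (Fin n)) : Fintype ((GP P).ConnectedComponent) :=
  Fintype.ofFinite _

instance (P : PartialOrder (Fin n)) : Fintype ((GP P).edgeSet) :=
  Fintype.ofFinite _

/-- `s` is an independent set of the graph `G`. -/
def IsIndep {V : Type*} (G : SimpleGraph V) (s : Finset V) : Prop :=
  ∀ a ∈ s, ∀ b ∈ s, ¬ G.Adj a b

/-- `s` is a maximum independent set of the graph `G`. -/
def IsMaxIndep {V : Type*} (G : SimpleGraph V) (s : Finset V) : Prop :=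
  IsIndep G s ∧ ∀ t : Finset V, IsIndep G t → t.card ≤ s.card

/-- `s` is a maximum independent set of the subgraph of `G` induced on the
vertex set `S` (e.g. on a connected component of `G`). -/
def IsMaxIndepOn {V : Type*} (G : SimpleGraph V) (S : Set V) (s : Finset V) : Prop :=
  ↑s ⊆ S ∧ IsIndep G s ∧ ∀ t : Finset V, ↑t ⊆ S → IsIndep G t → t.card ≤ s.card

/-- `μ(M, J) = ⋃_{J' ∈ M, J' ⊊ J} J'`. -/
def mu (P : PartialOrder (Fin n)) (M : Finset (ConnIdeal P)) (J : Finset (Fin n)) :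
    Finset (Fin n) :=
  (M.filter (fun J' => J'.1 ⊂ J)).biUnion (fun J' => J'.1)

/-- The strict order relation of the poset `F_M` associated with a maximum
independent set `M` of `G_P`: `i <_{F_M} j` iff `J_a ⊊ J_b` where `J_a, J_b ∈ M`
satisfy `J_a \ μ(M,J_a) = {i}` and `J_b \ μ(M,J_b) = {j}`. -/
def FMlt (P : PartialOrder (Fin n)) (M : Finset (ConnIdeal P)) (i j : Fin n) : Prop :=
  ∃ Ja ∈ M, ∃ Jb ∈ M,
    Ja.1 \ mu P M Ja.1 = {i} ∧ Jb.1 \ mu P M Jb.1 = {j} ∧ Ja.1 ⊂ Jb.1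

/-- The order relation of the poset `F_M`. -/
def FMle (P : PartialOrder (Fin n)) (M : Finset (ConnIdeal P)) (i j : Fin n) : Prop :=
  i = j ∨ FMlt P M i j

/-- Strict relation associated with the relation `le`. -/
def ltRel (le : Fin n → Fin n → Prop) (i j : Fin n) : Prop := le i j ∧ i ≠ j

/-- `j` covers `i` in the order given by the relation `le`. -/
def CovRel (le : Fin n → Fin n → Prop) (i j : Fin n) : Prop :=
  ltRel le i j ∧ ∀ k : Fin n, ltRel le i k → ¬ ltRel le k j

/-- The principal order ideal `Λ_i = {j : j ≤ i}` of the order given by `le`. -/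
def LamRel (le : Fin n → Fin n → Prop) (i : Fin n) : Finset (Fin n) :=
  Finset.univ.filter (fun j => le j i)

/-- The descent set of a forest order given by the relation `le`:
elements `i` whose parent (the element covering `i`) is smaller than `i`. -/
def DesRel (le : Fin n → Fin n → Prop) : Finset (Fin n) :=
  Finset.univ.filter (fun i => ∃ j : Fin n, CovRel le i j ∧ j < i)

/-- `Des(M) = Des(F_M)`. -/
def DesM (P : PartialOrder (Fin n)) (M : Finset (ConnIdeal P)) : Finset (Fin n) :=
  DesRel (FMle P M)

/-- `Des(M_r, M)`. -/
def DesMr (P : PartialOrder (Fin n)) (Mr M : Finset (ConnIdeal P)) : Finset (Fin n) :=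
  (DesM P M).filter (fun i => ∃ J ∈ Mr, J.1 \ mu P M J.1 = {i})

/-- `Des̄(M_r, M)`. -/
def DesBarMr (P : PartialOrder (Fin n)) (Mr M : Finset (ConnIdeal P)) :
    Finset (ConnIdeal P) :=
  Mr.filter (fun J => ∃ i ∈ DesMr P Mr M, J.1 \ mu P M J.1 = {i})

/-- The relation `le` is (the order relation of) a `P`-forest: a partial order
whose Hasse diagram is a forest, all of whose principal order ideals are
connected order ideals of `P`, and such that for incomparable `i, j` the union
`Λ_i ∪ Λ_j` is a disconnected order ideal of `P`. -/
structure IsPForestRel (P : PartialOrder (Fin n)) (le : Fin n → Fin n → Prop) : Prop where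
  refl : ∀ i, le i i
  trans : ∀ i j k, le i j → le j k → le i k
  antisymm : ∀ i j, le i j → le j i → i = j
  forest : ∀ i j k, CovRel le i j → CovRel le i k → j = k
  connIdeal : ∀ i, IsConnIdeal P (LamRel le i)
  disc : ∀ i j : Fin n, ¬ le i j → ¬ le j i →
    IsIdeal P (LamRel le i ∪ LamRel le j) ∧ ¬ JConn P (LamRel le i ∪ LamRel le j)

/-- The principal order ideal `Λ_i^P` of `P`. -/
def PIdeal (P : PartialOrder (Fin n)) (i : Fin n) : Finset (Fin n) :=
  Finset.univ.filter (fun k => P.le k i)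

/-- The generating set `gs(J)`: the maximal elements of `J` with respect to `P`. -/
def gsJ (P : PartialOrder (Fin n)) (J : Finset (Fin n)) : Finset (Fin n) :=
  J.filter (fun i => ∀ j ∈ J, ¬ P.lt i j)

/-- `P` is naturally labeled. -/
def NatLabeled (P : PartialOrder (Fin n)) : Prop :=
  ∀ i j : Fin n, P.lt i j → i < j

/-- `U_max(M, J)`: the maximal members of `U(M,J) = {J' ∈ M : J' ⊊ J}`. -/
def Umax (P : PartialOrder (Fin n)) (M : Finset (ConnIdeal P)) (J : Finset (Fin n)) :
    Finset (ConnIdeal P) :=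
  (M.filter (fun Ja => Ja.1 ⊂ J)).filter
    (fun Ja => ∀ Jb ∈ M, Jb.1 ⊂ J → Jb ≠ Ja → ¬ Ja.1 ⊂ Jb.1)

/-- The set of vertices of `G_P` which are principal order ideals of `P`. -/
def PIdealSet (P : PartialOrder (Fin n)) : Set (ConnIdeal P) :=
  {A : ConnIdeal P | ∃ i : Fin n, A.1 = PIdeal P i}

/-- The graph `H_P`: the subgraph of `G_P` induced by the principal order ideals. -/
def HP (P : PartialOrder (Fin n)) : SimpleGraph (PIdealSet P) :=
  (GP P).induce (PIdealSet P)

/-- `f` is a `P`-partition. -/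
def IsPPartition (P : PartialOrder (Fin n)) (f : Fin n → ℕ) : Prop :=
  (∀ i j : Fin n, P.lt i j → f j ≤ f i) ∧
  (∀ i j : Fin n, P.lt i j → j < i → f j < f i)

/-- The monomial `∏_{k ∈ J} x_k`. -/
def xJ (J : Finset (Fin n)) : MvPowerSeries (Fin n) ℚ :=
  ∏ k ∈ J, MvPowerSeries.X k

/-- The set of linear extensions of `P`, viewed as permutations `w` of `Fin n`
(in positions `0, …, n-1`) such that `i < j` whenever `w i <_P w j`. -/
def LinExts (P : PartialOrder (Fin n)) : Finset (Equiv.Perm (Fin n)) :=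
  Finset.univ.filter (fun w => ∀ i j : Fin n, P.lt (w i) (w j) → i < j)

/-- The major index of a permutation (with 1-indexed positions). -/
def maj (w : Equiv.Perm (Fin n)) : ℕ :=
  ∑ i ∈ Finset.univ.filter
      (fun i : Fin n => ∃ h : (i : ℕ) + 1 < n, w ⟨(i : ℕ) + 1, h⟩ < w i),
    ((i : ℕ) + 1)

/-- The finset of maximum independent sets of the connected component `c` of `G_P`. -/
def MaxIndepsOn (P : PartialOrder (Fin n)) (c : (GP P).ConnectedComponent) :
    Finset (Finset (ConnIdeal P)) :=
  Finset.univ.filter (fun Mr : Finset (ConnIdeal P) => IsMaxIndepOn (GP P) c.supp Mr)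
/-!
Members of an independent set `M` of `G_P` are pairwise nested or disjoint. Hence the sets
`J \ μ(M,J)`, `J ∈ M`, are pairwise disjoint, and each is nonempty because a connected ideal is
not covered by the smaller members of `M` inside it. Linear extensions of `P` show that `G_P` has
an independent set of size `n`, so for a maximum `M` these sets are exactly the singletons of
`{1, …, n}`. Writing `J_i` for the member with `J_i \ μ(M,J_i) = {i}`, one gets `j ≤_{F_M} i` iff
`j ∈ J_i` iff `J_j ⊆ J_i`: `F_M` is the inclusion order of the laminar family `M`, a forest whose
principal ideals are the `J_i`, and incomparable `i, j` have disjoint `J_i, J_j`, whose union is a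
disconnected order ideal.
-/

namespace SimpleGraph

variable {V : Type*} {G : SimpleGraph V} {s t : Set V} {v : V}

theorem subset_of_induce_connected (hs : (G.induce s).Connected) {x : V} (hxs : x ∈ s)
    (hxt : x ∈ t) (ht : ∀ a ∈ s, a ∈ t → ∀ b ∈ s, G.Adj a b → b ∈ t) : s ⊆ t := by
  intro y hys
  by_contra hyt
  obtain ⟨p⟩ := hs.preconnected ⟨x, hxs⟩ ⟨y, hys⟩
  obtain ⟨d, -, hd, hd'⟩ := p.exists_boundary_dart {z | z.1 ∈ t} hxt hyt
  exact hd' (ht _ d.fst.2 hd _ d.snd.2 d.adj)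

/-- The vertex set of the connected component of `v` in `G.induce s`. -/
def componentIn (G : SimpleGraph V) (s : Set V) (v : V) : Set V :=
  ⋃₀ {t | t ⊆ s ∧ v ∈ t ∧ (G.induce t).Connected}

theorem componentIn_subset : G.componentIn s v ⊆ s :=
  Set.sUnion_subset fun _ ht => ht.1

theorem mem_componentIn (hv : v ∈ s) : v ∈ G.componentIn s v :=
  ⟨{v}, ⟨Set.singleton_subset_iff.2 hv, rfl, Connected.of_subsingleton⟩, rfl⟩

theorem connected_induce_componentIn (hv : v ∈ s) :
    (G.induce (G.componentIn s v)).Connected :=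
  induce_sUnion_connected_of_pairwise_not_disjoint (Set.Nonempty.of_sUnion ⟨v, mem_componentIn hv⟩)
    (fun ht ht' => ⟨v, ht.2.1, ht'.2.1⟩) (fun ht => ht.2.2)

theorem subset_componentIn (hv : v ∈ s) (hts : t ⊆ s) (ht : (G.induce t).Connected)
    (hmeet : (t ∩ G.componentIn s v).Nonempty) : t ⊆ G.componentIn s v :=
  Set.subset_union_left.trans <| Set.subset_sUnion_of_mem
    ⟨Set.union_subset hts componentIn_subset, Or.inr (mem_componentIn hv),
      induce_union_connected ht.preconnected (connected_induce_componentIn hv).preconnected hmeet⟩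

theorem componentIn_subset_componentIn {w : V} (hst : s ⊆ t) (hv : v ∈ s) (hw : w ∈ t)
    (hmeet : (G.componentIn s v ∩ G.componentIn t w).Nonempty) :
    G.componentIn s v ⊆ G.componentIn t w :=
  subset_componentIn hw (componentIn_subset.trans hst) (connected_induce_componentIn hv) hmeet

end SimpleGraph

theorem Finset.exists_mem_eq_singleton_of_pairwiseDisjoint {ι α : Type*} [Fintype α]
    [DecidableEq α] {s : Finset ι} {f : ι → Finset α} (hf : (s : Set ι).PairwiseDisjoint f)
    (hne : ∀ i ∈ s, (f i).Nonempty) (hcard : Fintype.card α ≤ s.card) (a : α) :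
    ∃ i ∈ s, f i = {a} := by
  have hpos : ∀ i ∈ s, 1 ≤ (f i).card := fun i hi => (hne i hi).card_pos
  have hs : s.card ≤ ∑ i ∈ s, (f i).card := card_eq_sum_ones s ▸ sum_le_sum hpos
  have hunion : (s.biUnion f).card = ∑ i ∈ s, (f i).card := card_biUnion hf
  have hle : (s.biUnion f).card ≤ Fintype.card α := card_le_univ _
  have hone : ∀ i ∈ s, (f i).card = 1 := fun i hi =>
    ((sum_eq_sum_iff_of_le hpos).1 (by rw [← card_eq_sum_ones]; omega) i hi).symm
  have hcover : s.biUnion f = univ := eq_univ_of_card _ (by omega)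
  obtain ⟨i, hi, ha⟩ := mem_biUnion.1 (hcover ▸ mem_univ a)
  exact ⟨i, hi, eq_singleton_iff_unique_mem.2
    ⟨ha, fun b hb => card_le_one.1 (hone i hi).le b hb a ha⟩⟩

section ConnectedIdeals

variable {P : PartialOrder (Fin n)}

theorem IsIdeal.union {A B : Finset (Fin n)} (hA : IsIdeal P A) (hB : IsIdeal P B) :
    IsIdeal P (A ∪ B) := by
  intro x hx y hyx
  rcases Finset.mem_union.1 hx with hx | hx
  · exact Finset.mem_union_left _ (hA x hx y hyx)
  · exact Finset.mem_union_right _ (hB x hx y hyx)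

theorem not_jConn_union {A B : Finset (Fin n)} (hA : IsIdeal P A) (hB : IsIdeal P B)
    (hAB : Disjoint A B) (hAne : A.Nonempty) (hBne : B.Nonempty) : ¬ JConn P (A ∪ B) := by
  intro hconn
  obtain ⟨x, hx⟩ := hAne
  obtain ⟨y, hy⟩ := hBne
  have hsub : ((A ∪ B : Finset (Fin n)) : Set (Fin n)) ⊆ A := by
    refine SimpleGraph.subset_of_induce_connected hconn (by simp [hx]) hx ?_
    rintro a - ha b hb ⟨-, hab | hba⟩
    · rcases Finset.mem_union.1 hb with hb | hb
      · exact hb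
      · exact absurd (hB b hb a hab) (Finset.disjoint_left.1 hAB ha)
    · exact hA a ha b hba
  exact Finset.disjoint_left.1 hAB (hsub (by simp [hy])) hy

theorem isConnIdeal_componentIn {I : Finset (Fin n)} (hI : IsIdeal P I) {i : Fin n}
    (hi : i ∈ I) : IsConnIdeal P ((compGraph P).componentIn I i).toFinset := by
  refine ⟨?_, by rw [JConn, Set.coe_toFinset]; exact SimpleGraph.connected_induce_componentIn hi⟩
  intro x hx y hyx
  rw [Set.mem_toFinset] at hx ⊢
  by_cases hxy : y = x
  · exact hxy ▸ hx
  have hxI : x ∈ I := SimpleGraph.componentIn_subset hx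
  have hpair : ({x, y} : Set (Fin n)) ⊆ (compGraph P).componentIn I i :=
    SimpleGraph.subset_componentIn hi (by simp [Set.insert_subset_iff, hxI, hI x hxI y hyx])
      (SimpleGraph.induce_pair_connected_of_adj ⟨Ne.symm hxy, Or.inr hyx⟩) ⟨x, by simp, hx⟩
  exact hpair (by simp)

/-- The witness: the connected components of `i` in the initial segments `{j | j ≤ i}` of a linear
extension of `P`, a laminar family of `n` connected ideals. -/
theorem exists_isIndep_card_eq (P : PartialOrder (Fin n)) :
    ∃ T : Finset (ConnIdeal P), IsIndep (GP P) T ∧ T.card = n := by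
  have : IsPartialOrder (Fin n) P.le :=
    { refl := P.le_refl, trans := fun _ _ _ => P.le_trans _ _ _,
      antisymm := fun _ _ => P.le_antisymm _ _ }
  obtain ⟨r, hr, hPr⟩ := extend_partialOrder P.le
  let I : Fin n → Finset (Fin n) := fun i => univ.filter (r · i)
  have hiI : ∀ i, i ∈ I i := fun i => by simp [I, refl_of r i]
  have hI : ∀ i, IsIdeal P (I i) := fun i x hx y hyx => by
    simp only [I, mem_filter, mem_univ, true_and] at hx ⊢
    exact _root_.trans (hPr y x hyx) hx
  let F : Fin n → ConnIdeal P := fun i =>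
    ⟨((compGraph P).componentIn (I i) i).toFinset, isConnIdeal_componentIn (hI i) (hiI i)⟩
  have hF : ∀ i, ((F i).1 : Set (Fin n)) = (compGraph P).componentIn (I i) i :=
    fun i => Set.coe_toFinset _
  have hFI : ∀ i, (F i).1 ⊆ I i := fun i => by
    rw [← Finset.coe_subset, hF]; exact SimpleGraph.componentIn_subset
  have hlam : ∀ i j, r i j → ((F i).1 ∩ (F j).1).Nonempty → (F i).1 ⊆ (F j).1 := by
    intro i j hij hmeet
    have hIij : I i ⊆ I j := fun k hk => by
      simp only [I, mem_filter, mem_univ, true_and] at hk ⊢; exact _root_.trans hk hij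
    rw [← coe_subset, hF, hF]
    exact SimpleGraph.componentIn_subset_componentIn (coe_subset.2 hIij) (hiI i) (hiI j)
      (by rwa [← hF, ← hF, ← coe_inter, coe_nonempty])
  have hiF : ∀ i, i ∈ (F i).1 := fun i => by
    rw [← Finset.mem_coe, hF]; exact SimpleGraph.mem_componentIn (hiI i)
  have hrF : ∀ {i j}, i ∈ (F j).1 → r i j := fun h => by
    simpa [I] using hFI _ h
  have hFinj : Function.Injective F := fun i j hij =>
    antisymm (hrF (hij ▸ hiF i)) (hrF (hij ▸ hiF j))
  refine ⟨univ.image F, ?_, by rw [card_image_of_injective _ hFinj, card_univ, Fintype.card_fin]⟩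
  simp only [IsIndep, mem_image, mem_univ, true_and]
  rintro _ ⟨i, rfl⟩ _ ⟨j, rfl⟩ ⟨hmeet, hnij, hnji⟩
  rcases total_of r i j with hij | hji
  · exact hnij (hlam i j hij hmeet)
  · exact hnji (hlam j i hji (by rwa [inter_comm]))

theorem isPForestRel_of_laminar (f : Fin n → Finset (Fin n)) (hinj : Function.Injective f)
    (hmem : ∀ i j, i ∈ f j ↔ f i ⊆ f j) (hf : ∀ i, IsConnIdeal P (f i))
    (hlam : ∀ i j, (f i ∩ f j).Nonempty → f i ⊆ f j ∨ f j ⊆ f i) :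
    IsPForestRel P (fun i j => f i ⊆ f j) := by
  have hself : ∀ i, i ∈ f i := fun i => (hmem i i).2 subset_rfl
  have hLam : ∀ i, LamRel (fun i j => f i ⊆ f j) i = f i := fun i => by
    ext j; simp [LamRel, hmem]
  have hcov : ∀ {i j k}, CovRel (fun i j => f i ⊆ f j) i j →
      CovRel (fun i j => f i ⊆ f j) i k → f j ⊆ f k → j = k := by
    rintro i j k ⟨hij, -⟩ ⟨-, hk⟩ hjk
    by_contra hne
    exact hk j hij ⟨hjk, hne⟩
  refine ⟨fun i => subset_rfl, fun i j k => subset_trans,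
    fun i j hij hji => hinj (subset_antisymm hij hji), ?_, fun i => hLam i ▸ hf i, ?_⟩
  · intro i j k hj hk
    rcases hlam j k ⟨i, mem_inter.2 ⟨(hmem i j).2 hj.1.1, (hmem i k).2 hk.1.1⟩⟩ with h | h
    · exact hcov hj hk h
    · exact (hcov hk hj h).symm
  · intro i j hij hji
    have hdisj : Disjoint (f i) (f j) := by
      by_contra h
      rcases hlam i j (not_disjoint_iff_nonempty_inter.1 h) with h | h
      exacts [hij h, hji h]
    rw [hLam, hLam]
    exact ⟨(hf i).1.union (hf j).1,
      not_jConn_union (hf i).1 (hf j).1 hdisj ⟨i, hself i⟩ ⟨j, hself j⟩⟩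

end ConnectedIdeals

section MaximumIndependentSets

variable {P : PartialOrder (Fin n)} {M : Finset (ConnIdeal P)} {A B : ConnIdeal P}

theorem mem_mu {J : Finset (Fin n)} {i : Fin n} :
    i ∈ mu P M J ↔ ∃ A ∈ M, A.1 ⊂ J ∧ i ∈ A.1 := by
  simp [mu, and_assoc]

theorem subset_or_subset_of_isIndep (hM : IsIndep (GP P) M) (hA : A ∈ M) (hB : B ∈ M)
    {x : Fin n} (hxA : x ∈ A.1) (hxB : x ∈ B.1) : A.1 ⊆ B.1 ∨ B.1 ⊆ A.1 := by
  by_contra! h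
  exact hM A hA B hB ⟨⟨x, mem_inter.2 ⟨hxA, hxB⟩⟩, h.1, h.2⟩

theorem disjoint_sdiff_mu (hM : IsIndep (GP P) M) (hA : A ∈ M) (hB : B ∈ M) (hAB : A ≠ B) :
    Disjoint (A.1 \ mu P M A.1) (B.1 \ mu P M B.1) := by
  rw [Finset.disjoint_left]
  intro x hxA hxB
  rw [mem_sdiff, mem_mu] at hxA hxB
  rcases subset_or_subset_of_isIndep hM hA hB hxA.1 hxB.1 with h | h
  · exact hxB.2 ⟨A, hA, h.ssubset_of_ne (Subtype.val_injective.ne hAB), hxA.1⟩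
  · exact hxA.2 ⟨B, hB, h.ssubset_of_ne (Subtype.val_injective.ne hAB.symm), hxB.1⟩

theorem sdiff_mu_nonempty (hM : IsIndep (GP P) M) (A : ConnIdeal P) :
    (A.1 \ mu P M A.1).Nonempty := by
  rw [nonempty_iff_ne_empty, Ne, sdiff_eq_empty_iff_subset]
  intro hcover
  obtain ⟨⟨y, hyA⟩⟩ := A.2.2.nonempty
  have hy : y ∈ A.1 := hyA
  -- The largest member of `M` strictly inside `A` through `y` is, by laminarity, closed under
  -- comparability inside `A`, hence contains all of the connected set `A`.
  let C := M.filter fun B => B.1 ⊂ A.1 ∧ y ∈ B.1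
  obtain ⟨B, hB, hBA, hyB⟩ := mem_mu.1 (hcover hy)
  obtain ⟨B, hBC, hBmax⟩ :=
    C.exists_max_image (fun B => B.1.card) ⟨B, mem_filter.2 ⟨hB, hBA, hyB⟩⟩
  simp only [C, mem_filter, and_imp] at hBC hBmax
  obtain ⟨hB, hBA, hyB⟩ := hBC
  have hAB : (A.1 : Set (Fin n)) ⊆ B.1 := by
    refine SimpleGraph.subset_of_induce_connected A.2.2 hy hyB ?_
    rintro a - ha b hb ⟨-, hab | hba⟩
    · obtain ⟨C', hC', hC'A, hbC'⟩ := mem_mu.1 (hcover hb)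
      rcases subset_or_subset_of_isIndep hM hB hC' ha (C'.2.1 b hbC' a hab) with h | h
      · exact eq_of_subset_of_card_le h (hBmax C' hC' hC'A (h hyB)) ▸ hbC'
      · exact h hbC'
    · exact B.2.1 a ha b hba
  exact hBA.2 (by exact_mod_cast hAB)

theorem eq_of_sdiff_mu_eq_singleton (hM : IsIndep (GP P) M) (hA : A ∈ M) (hB : B ∈ M)
    {i : Fin n} (hAi : A.1 \ mu P M A.1 = {i}) (hBi : B.1 \ mu P M B.1 = {i}) : A = B := by
  by_contra hAB
  have := disjoint_sdiff_mu hM hA hB hAB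
  rw [hAi, hBi, disjoint_self] at this
  exact singleton_ne_empty i this

theorem exists_sdiff_mu_eq_singleton (hM : IsMaxIndep (GP P) M) (i : Fin n) :
    ∃ A ∈ M, A.1 \ mu P M A.1 = {i} := by
  obtain ⟨T, hT, hTcard⟩ := exists_isIndep_card_eq P
  exact exists_mem_eq_singleton_of_pairwiseDisjoint
    (fun A hA B hB hAB => disjoint_sdiff_mu hM.1 hA hB hAB) (fun A _ => sdiff_mu_nonempty hM.1 A)
    (by simpa [hTcard] using hM.2 T hT) i

variable (hM : IsMaxIndep (GP P) M)

def idealOf (i : Fin n) : ConnIdeal P := (exists_sdiff_mu_eq_singleton hM i).choose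

theorem idealOf_mem (i : Fin n) : idealOf hM i ∈ M :=
  (exists_sdiff_mu_eq_singleton hM i).choose_spec.1

theorem sdiff_mu_idealOf (i : Fin n) : (idealOf hM i).1 \ mu P M (idealOf hM i).1 = {i} :=
  (exists_sdiff_mu_eq_singleton hM i).choose_spec.2

theorem mem_sdiff_mu_idealOf (i : Fin n) : i ∈ (idealOf hM i).1 \ mu P M (idealOf hM i).1 := by
  rw [sdiff_mu_idealOf]; exact mem_singleton_self i

theorem eq_idealOf (hA : A ∈ M) {i : Fin n} (hAi : A.1 \ mu P M A.1 = {i}) : A = idealOf hM i :=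
  eq_of_sdiff_mu_eq_singleton hM.1 hA (idealOf_mem hM i) hAi (sdiff_mu_idealOf hM i)

theorem idealOf_injective : Function.Injective fun i => (idealOf hM i).1 := fun i j hij => by
  have := sdiff_mu_idealOf hM i
  rwa [show idealOf hM i = idealOf hM j from Subtype.ext hij, sdiff_mu_idealOf,
    singleton_inj, eq_comm] at this

theorem mem_idealOf_iff {i j : Fin n} :
    j ∈ (idealOf hM i).1 ↔ (idealOf hM j).1 ⊆ (idealOf hM i).1 := by
  refine ⟨fun hj => ?_, fun h => h (mem_sdiff.1 (mem_sdiff_mu_idealOf hM j)).1⟩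
  obtain ⟨hjj, hjmu⟩ := mem_sdiff.1 (mem_sdiff_mu_idealOf hM j)
  rcases subset_or_subset_of_isIndep hM.1 (idealOf_mem hM j) (idealOf_mem hM i) hjj hj with h | h
  · exact h
  · rcases h.eq_or_ssubset with h | h
    · exact h.ge
    · exact absurd (mem_mu.2 ⟨_, idealOf_mem hM i, h, hj⟩) hjmu

theorem fMle_iff {i j : Fin n} : FMle P M i j ↔ (idealOf hM i).1 ⊆ (idealOf hM j).1 := by
  constructor
  · rintro (rfl | ⟨A, hA, B, hB, hAi, hBj, hAB⟩)
    · exact subset_rfl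
    · rw [← eq_idealOf hM hA hAi, ← eq_idealOf hM hB hBj]
      exact hAB.subset
  · intro h
    by_cases hij : i = j
    · exact Or.inl hij
    · exact Or.inr ⟨_, idealOf_mem hM i, _, idealOf_mem hM j, sdiff_mu_idealOf hM i,
        sdiff_mu_idealOf hM j, h.ssubset_of_ne ((idealOf_injective hM).ne hij)⟩

end MaximumIndependentSets

/-- Lemma 2.5: for any maximum independent set `M` of `G_P`,
the associated order `F_M` is a `P`-forest. -/
theorem statement_8 (n : ℕ) (P : PartialOrder (Fin n))
    (M : Finset (ConnIdeal P)) (hM : IsMaxIndep (GP P) M) :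
    IsPForestRel P (FMle P M) := by
  have hFM : FMle P M = fun i j => (idealOf hM i).1 ⊆ (idealOf hM j).1 := by
    ext i j
    exact fMle_iff hM
  rw [hFM]
  refine isPForestRel_of_laminar _ (idealOf_injective hM) (fun i j => mem_idealOf_iff hM)
    (fun i => (idealOf hM i).2) fun i j ⟨x, hx⟩ => ?_
  exact subset_or_subset_of_isIndep hM.1 (idealOf_mem hM i) (idealOf_mem hM j)
    (mem_inter.1 hx).1 (mem_inter.1 hx).2
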